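/- arXiv:2411.10260 — 6 statements merged into one kernel-verified Lean document; each statement's English description precedes it below -/
import Mathlib

section
/- Let g be a DGCA and c_A, c_B closed degree-2 elements. Let ĝ_A = g[e_A]/(d e_A = c_A) and ĝ_B = g[e_B]/(d e_B = c_B) with e_A, e_B of degree 1, and form the fiber product algebra D = g[e_A, e_B] with both relations. Suppose H_A = H_g + e_A·c_B ∈ ĝ_A and H_B = H_g + e_B·c_A ∈ ĝ_B for a common degree-3 element H_g ∈ g with d H_g = −c_A·c_B. Then: (i) H_A and H_B are closed in ĝ_A resp. ĝ_B; (ii) the Poincaré form P := e_B·e_A ∈ D satisfies d P = H_A − H_B (identifying H_A, H_B with their pullbacks to D). -/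
/-- T-duality correspondence. With degree-1 generators `e_A, e_B`
(`d e_A = c_A`, `d e_B = c_B` for closed degree-2 elements) and a common degree-3
element `H_g` with `d H_g = −c_A·c_B`, the twists `H_A = H_g + e_A·c_B` and
`H_B = H_g + e_B·c_A` are closed, and the Poincaré form `P = e_B·e_A` satisfies
`d P = H_A − H_B`. -/
theorem stmt6
    (D : Type*) [Ring D] [Algebra ℝ D]
    (σ : D →ₐ[ℝ] D) (d : D →ₗ[ℝ] D)
    (hLeib : ∀ x y : D, d (x * y) = d x * y + σ x * d y)
    (eA eB cA cB Hg : D)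
    (hσeA : σ eA = - eA) (hσeB : σ eB = - eB)
    (hdeA : d eA = cA) (hdeB : d eB = cB)
    (hdcA : d cA = 0) (hdcB : d cB = 0)
    (hdHg : d Hg = - (cA * cB))
    -- degree-2 elements are central (graded commutativity)
    (hcomm : cB * eA = eA * cB)
    (hccomm : cA * cB = cB * cA) :
    d (Hg + eA * cB) = 0 ∧
    d (Hg + eB * cA) = 0 ∧
    d (eB * eA) = (Hg + eA * cB) - (Hg + eB * cA) := by
  refine ⟨?_, ?_, ?_⟩
  · rw [map_add, hdHg, hLeib, hdeA, hdcB, mul_zero, add_zero]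
    abel
  · rw [map_add, hdHg, hLeib, hdeB, hdcA, mul_zero, add_zero, hccomm]
    abel
  · rw [hLeib, hdeB, hdeA, hσeB, hcomm, neg_mul]
    abel
end

section
/- Conversely to the Poincaré-form lemma: if ĝ_A, ĝ_B are degree-1 central extensions of a DGCA g by closed 2-cocycles c_A, c_B, equipped with closed degree-3 elements H_A ∈ ĝ_A, H_B ∈ ĝ_B such that the fiber integrations satisfy p_{A*} H_A = c_B and p_{B*} H_B = c_A, and such that on the fiber product d(e_B·e_A) = π_A* H_A − π_B* H_B, then there exists a common degree-3 element H_g ∈ g with H_A = H_g + e_A·c_B, H_B = H_g + e_B·c_A, and d H_g = − c_A·c_B. -/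
/-- converse to the Poincaré-form lemma.  If the closed degree-3 twists
`H_A, H_B` on the extensions `ĝ_A, ĝ_B` of `g` (basic subalgebra `G`) have fiber
integrations `p_{A*} H_A = c_B`, `p_{B*} H_B = c_A` (i.e. `H_A = HAbas + e_A·c_B`,
`H_B = HBbas + e_B·c_A` with basic parts in `G`), and on the fiber product
`d (e_B·e_A) = H_A − H_B`, then there exists a common basic `H_g` with
`H_A = H_g + e_A·c_B`, `H_B = H_g + e_B·c_A` and `d H_g = −c_A·c_B`. -/
theorem stmt7
    (D : Type*) [Ring D] [Algebra ℝ D]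
    (σ : D →ₐ[ℝ] D) (d : D →ₗ[ℝ] D)
    (hLeib : ∀ x y : D, d (x * y) = d x * y + σ x * d y)
    (G : Subalgebra ℝ D)
    (eA eB cA cB : D) (hcA : cA ∈ G) (hcB : cB ∈ G)
    (hσeA : σ eA = - eA) (hσeB : σ eB = - eB)
    (hdeA : d eA = cA) (hdeB : d eB = cB)
    (hdcA : d cA = 0) (hdcB : d cB = 0)
    (HA HB : D) (hdHA : d HA = 0) (hdHB : d HB = 0)
    (HAbas HBbas : D) (hHAbas : HAbas ∈ G) (hHBbas : HBbas ∈ G)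
    (hHA : HA = HAbas + eA * cB)  -- fiber integration p_{A*} H_A = c_B
    (hHB : HB = HBbas + eB * cA)  -- fiber integration p_{B*} H_B = c_A
    (hcomm : cB * eA = eA * cB)
    (hP : d (eB * eA) = HA - HB) :
    ∃ Hg : D, Hg ∈ G ∧ HA = Hg + eA * cB ∧ HB = Hg + eB * cA ∧
      d Hg = - (cA * cB) := by
  refine ⟨HAbas, hHAbas, hHA, ?_, ?_⟩
  · have h1 : d (eB * eA) = eA * cB - eB * cA := by
      rw [hLeib, hdeB, hσeB, hdeA, hcomm]; noncomm_ring
    have h : eA * cB - eB * cA = HAbas + eA * cB - (HBbas + eB * cA) := by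
      rw [← h1, hP, hHA, hHB]
    have h2 : HAbas = HBbas := by
      calc HAbas = (HAbas + eA * cB - (HBbas + eB * cA)) + HBbas + eB * cA - eA * cB := by abel
        _ = (eA * cB - eB * cA) + HBbas + eB * cA - eA * cB := by rw [← h]
        _ = HBbas := by abel
    rw [hHB, h2]
  · have h3 : d (eA * cB) = cA * cB := by
      rw [hLeib, hdeA, hdcB, hσeA]; noncomm_ring
    have h4 : d HAbas + cA * cB = 0 := by
      rw [← h3, ← map_add, ← hHA, hdHA]
    exact eq_neg_of_add_eq_zero_left h4
end

section
/- Let ĝ_A, ĝ_B be degree-1 central extensions of a DGCA g by closed 2-cocycles c_A, c_B, in T-duality correspondence via twists H_{A/B} = H_g + e_{A/B}·c_{B/A} where d H_g = −c_A c_B. Define the H-twisted differentials d_{H} := d − H·(−) on the ℤ₂-periodized complexes. Then the Fourier–Mukai map T : ĝ_A → ĝ_B defined on the decomposition F = F_bas + e_A·p_{A*}F by T(F) := −p_{A*}F − e_B·F_bas is a linear isomorphism satisfying (d − H_B)∘T = −T∘(d − H_A); in particular T maps (d−H_A)-closed elements to (d−H_B)-closed elements. -/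
/-- The `H_A`-twisted differential `d − H_A·(−)` of the extension `ĝ_A = g[e]/(d e = c)`
with twist `H_A = H_g + e·c'`, written in the decomposition `x + e·y ↔ (x, y)`:
`(d − H)(x + e y) = (d x + c y − H_g x) + e (− d y − c' x + H_g y)`. -/
def twistD {G : Type*} [Ring G] [Algebra ℝ G]
    (d : G →ₗ[ℝ] G) (Hg c c' : G) : G × G → G × G :=
  fun v => (d v.1 + c * v.2 - Hg * v.1, - d v.2 - c' * v.1 + Hg * v.2)

/-- The Fourier–Mukai transform `F = F_bas + e_A·p_{A*}F ↦ − p_{A*}F − e_B·F_bas`,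
written in the decompositions `(F_bas, p_{A*}F) ↦ (− p_{A*}F, − F_bas)`. -/
def fourierMukai {G : Type*} [Ring G] : G × G → G × G := fun v => (- v.2, - v.1)

/-- for a T-duality correspondence (`d H_g = − c_A·c_B`, twists
`H_{A/B} = H_g + e_{A/B}·c_{B/A}`), the Fourier–Mukai map is a linear isomorphism
satisfying `(d − H_B) ∘ T = − T ∘ (d − H_A)`; in particular it maps
`(d − H_A)`-closed elements to `(d − H_B)`-closed elements. -/
theorem stmt8
    (G : Type*) [Ring G] [Algebra ℝ G]
    (d : G →ₗ[ℝ] G) (cA cB Hg : G)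
    (hdcA : d cA = 0) (hdcB : d cB = 0) (hdHg : d Hg = - (cA * cB)) :
    Function.Bijective (fourierMukai (G := G)) ∧
    (∀ v w : G × G, fourierMukai (v + w) = fourierMukai v + fourierMukai w) ∧
    (∀ (r : ℝ) (v : G × G), fourierMukai (r • v) = r • fourierMukai v) ∧
    (∀ v : G × G,
      twistD d Hg cB cA (fourierMukai v) = - fourierMukai (twistD d Hg cA cB v)) ∧
    (∀ v : G × G, twistD d Hg cA cB v = 0 → twistD d Hg cB cA (fourierMukai v) = 0) := by
  have key : ∀ v : G × G,
      twistD d Hg cB cA (fourierMukai v) = - fourierMukai (twistD d Hg cA cB v) := by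
    intro v
    simp only [fourierMukai, twistD, Prod.ext_iff, map_neg, Prod.neg_mk, mul_neg, neg_neg]
    constructor <;> abel
  refine ⟨⟨fun v w h => ?_, fun v => ⟨(-v.2, -v.1), by simp [fourierMukai]⟩⟩,
    fun v w => by simp [fourierMukai, Prod.ext_iff]; exact ⟨by abel, by abel⟩,
    fun r v => by simp [fourierMukai, Prod.ext_iff, smul_neg],
    key, ?_⟩
  · have h1 := congrArg Prod.fst h
    have h2 := congrArg Prod.snd h
    simp [fourierMukai] at h1 h2
    exact Prod.ext h2 h1
  · intro v h
    rw [key v, h]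
    simp [fourierMukai]
end

section
/- Consider the CE algebra of the cyclified 3-twisted K-theory spectrum: the free CDGA on generators ω₂ (deg 2), h₃ (deg 3), sh₃ (deg 2), (f_{2k})_{k∈ℤ} (deg 2k), (sf_{2k})_{k∈ℤ} (deg 2k−1) with differential d ω₂ = 0, d h₃ = ω₂·sh₃, d(sh₃) = 0, d f_{2k+2} = h₃·f_{2k} + ω₂·sf_{2k+2}, d(sf_{2k+2}) = −(sh₃)·f_{2k} + h₃·sf_{2k}; and its odd analogue with f_{2k+1}, sf_{2k+1}. Then the assignment ω₂ ↦ −sh₃, sh₃ ↦ −ω₂, h₃ ↦ h₃, f_{2k} ↦ sf_{2k+1}, sf_{2k+2} ↦ f_{2k+1} extends to an isomorphism of differential graded-commutative algebras between the even and odd cyclified algebras. -/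
/-- the assignment `ω₂ ↦ −sh₃`, `sh₃ ↦ −ω₂`, `h₃ ↦ h₃`,
`f_{2k} ↦ sf_{2k+1}`, `sf_{2k+2} ↦ f_{2k+1}` extends to an isomorphism of differential
graded-commutative algebras between the even and odd cyclified 3-twisted K-theory
algebras.  Here `A` is the even algebra (with `f k` encoding `f_{2k}` and `sf k`
encoding `sf_{2k}`) and `B` the odd one (with `f' k` encoding `f_{2k+1}` and `sf' k`
encoding `sf_{2k+1}`). -/
theorem stmt9
    (A B : Type*) [Ring A] [Algebra ℝ A] [Ring B] [Algebra ℝ B]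
    (σA : A →ₐ[ℝ] A) (σB : B →ₐ[ℝ] B)
    (dA : A →ₗ[ℝ] A) (dB : B →ₗ[ℝ] B)
    (hLA : ∀ x y : A, dA (x * y) = dA x * y + σA x * dA y)
    (hLB : ∀ x y : B, dB (x * y) = dB x * y + σB x * dB y)
    -- generators of the even cyclified algebra A and its differential
    (ω₂ h₃ sh₃ : A) (f sf : ℤ → A)
    (hgenA : Algebra.adjoin ℝ
      (({ω₂, h₃, sh₃} : Set A) ∪ Set.range f ∪ Set.range sf) = ⊤)
    (hdω₂ : dA ω₂ = 0) (hdh₃ : dA h₃ = ω₂ * sh₃) (hdsh₃ : dA sh₃ = 0)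
    (hdf : ∀ k : ℤ, dA (f (k + 1)) = h₃ * f k + ω₂ * sf (k + 1))
    (hdsf : ∀ k : ℤ, dA (sf (k + 1)) = - (sh₃ * f k) + h₃ * sf k)
    -- Koszul parities of the generators of A
    (hσω₂ : σA ω₂ = ω₂) (hσh₃ : σA h₃ = - h₃) (hσsh₃ : σA sh₃ = sh₃)
    (hσf : ∀ k, σA (f k) = f k) (hσsf : ∀ k, σA (sf k) = - sf k)
    -- generators of the odd cyclified algebra B and its differential
    (ω₂' h₃' sh₃' : B) (f' sf' : ℤ → B)
    (hgenB : Algebra.adjoin ℝ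
      (({ω₂', h₃', sh₃'} : Set B) ∪ Set.range f' ∪ Set.range sf') = ⊤)
    (hdω₂' : dB ω₂' = 0) (hdh₃' : dB h₃' = ω₂' * sh₃') (hdsh₃' : dB sh₃' = 0)
    (hdf' : ∀ k : ℤ, dB (f' k) = h₃' * f' (k - 1) + ω₂' * sf' k)
    (hdsf' : ∀ k : ℤ, dB (sf' (k + 1)) = - (sh₃' * f' k) + h₃' * sf' k)
    (hcommB : ω₂' * sh₃' = sh₃' * ω₂')
    -- the algebra homomorphism extending the stated assignment, and its inverse
    (Φ : A →ₐ[ℝ] B) (Ψ : B →ₐ[ℝ] A)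
    (hΦσ : ∀ x : A, Φ (σA x) = σB (Φ x))
    (hΦω₂ : Φ ω₂ = - sh₃') (hΦsh₃ : Φ sh₃ = - ω₂') (hΦh₃ : Φ h₃ = h₃')
    (hΦf : ∀ k : ℤ, Φ (f k) = sf' k)            -- f_{2k} ↦ sf_{2k+1}
    (hΦsf : ∀ k : ℤ, Φ (sf (k + 1)) = f' k)     -- sf_{2k+2} ↦ f_{2k+1}
    (hΨω₂' : Ψ ω₂' = - sh₃) (hΨsh₃' : Ψ sh₃' = - ω₂) (hΨh₃' : Ψ h₃' = h₃)
    (hΨf' : ∀ k : ℤ, Ψ (f' k) = sf (k + 1))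
    (hΨsf' : ∀ k : ℤ, Ψ (sf' k) = f k) :
    Function.Bijective Φ ∧ (∀ x : A, Φ (dA x) = dB (Φ x)) := by
  have hΦsf' : ∀ k : ℤ, Φ (sf k) = f' (k - 1) := fun k => by
    have := hΦsf (k - 1); rwa [sub_add_cancel] at this
  -- Ψ ∘ Φ = id
  have hΨΦ : ∀ x : A, Ψ (Φ x) = x := by
    intro x
    have hx : x ∈ Algebra.adjoin ℝ
        (({ω₂, h₃, sh₃} : Set A) ∪ Set.range f ∪ Set.range sf) := hgenA ▸ trivial
    induction hx using Algebra.adjoin_induction with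
    | mem y hy =>
      rcases hy with (h | h) | h
      · rcases h with h | h | h <;> subst h <;>
          simp [hΦω₂, hΦh₃, hΦsh₃, hΨω₂', hΨh₃', hΨsh₃']
      · obtain ⟨k, rfl⟩ := h; rw [hΦf, hΨsf']
      · obtain ⟨k, rfl⟩ := h; rw [hΦsf', hΨf', sub_add_cancel]
    | algebraMap r => simp
    | add x y _ _ ihx ihy => simp [ihx, ihy]
    | mul x y _ _ ihx ihy => simp [ihx, ihy]
  have hΦΨ : ∀ y : B, Φ (Ψ y) = y := by
    intro y
    have hy : y ∈ Algebra.adjoin ℝ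
        (({ω₂', h₃', sh₃'} : Set B) ∪ Set.range f' ∪ Set.range sf') := hgenB ▸ trivial
    induction hy using Algebra.adjoin_induction with
    | mem z hz =>
      rcases hz with (h | h) | h
      · rcases h with h | h | h <;> subst h <;>
          simp [hΦω₂, hΦh₃, hΦsh₃, hΨω₂', hΨh₃', hΨsh₃']
      · obtain ⟨k, rfl⟩ := h; rw [hΨf', hΦsf]
      · obtain ⟨k, rfl⟩ := h; rw [hΨsf', hΦf]
    | algebraMap r => simp
    | add x y _ _ ihx ihy => simp [ihx, ihy]
    | mul x y _ _ ihx ihy => simp [ihx, ihy]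
  refine ⟨⟨fun a b h => by rw [← hΨΦ a, h, hΨΦ], fun b => ⟨Ψ b, hΦΨ b⟩⟩, ?_⟩
  -- d kills constants
  have hdA1 : dA 1 = 0 := by
    have h := hLA 1 1
    simp only [one_mul, mul_one, map_one] at h
    exact (left_eq_add.mp h)
  have hdB1 : dB 1 = 0 := by
    have h := hLB 1 1
    simp only [one_mul, mul_one, map_one] at h
    exact (left_eq_add.mp h)
  have hdAc : ∀ r : ℝ, dA (algebraMap ℝ A r) = 0 := fun r => by
    rw [Algebra.algebraMap_eq_smul_one, map_smul, hdA1, smul_zero]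
  have hdBc : ∀ r : ℝ, dB (algebraMap ℝ B r) = 0 := fun r => by
    rw [Algebra.algebraMap_eq_smul_one, map_smul, hdB1, smul_zero]
  intro x
  have hx : x ∈ Algebra.adjoin ℝ
      (({ω₂, h₃, sh₃} : Set A) ∪ Set.range f ∪ Set.range sf) := hgenA ▸ trivial
  induction hx using Algebra.adjoin_induction with
  | mem y hy =>
    rcases hy with (h | h) | h
    · rcases h with h | h | h <;> subst h
      · simp [hdω₂, hΦω₂, hdsh₃']
      · rw [hdh₃, map_mul, hΦω₂, hΦsh₃, hΦh₃, hdh₃', neg_mul_neg, hcommB]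
      · simp [hdsh₃, hΦsh₃, hdω₂']
    · obtain ⟨k, rfl⟩ := h
      have hk : f k = f ((k - 1) + 1) := by rw [sub_add_cancel]
      rw [hk, hdf (k - 1), map_add, map_mul, map_mul, hΦh₃, hΦf, hΦω₂, hΦsf,
        hΦf, hdsf' (k - 1), neg_mul, add_comm]
    · obtain ⟨k, rfl⟩ := h
      have hk : sf k = sf ((k - 1) + 1) := by rw [sub_add_cancel]
      rw [hk, hdsf (k - 1), map_add, map_neg, map_mul, map_mul, hΦsh₃, hΦf,
        hΦh₃, hΦsf', hΦsf, hdf' (k - 1), neg_mul, neg_neg, add_comm]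
  | algebraMap r => rw [hdAc, map_zero, AlgHom.commutes, hdBc]
  | add x y _ _ ihx ihy => simp [ihx, ihy]
  | mul x y _ _ ihx ihy =>
    rw [hLA, map_add, map_mul, map_mul, ihx, ihy, hΦσ, map_mul, hLB]
end

section
/- In the setting of the cyclified twisted K-theory CE algebras (even and odd versions as above), there are exactly four graded-algebra isomorphisms between them that fix h₃, swap ω₂ ↔ ±sh₃, and swap f_{2k} ↔ ±sf_{2k+1}, sf_{2k+2} ↔ ±f_{2k+1}, and commute with the differentials. Concretely, a map sending ω₂ ↦ −(−1)^q sh₃, sh₃ ↦ −(−1)^q ω₂, f_{2k+1} ↦ (−1)^{x₀} sf_{2k+2}, sf_{2k+1} ↦ (−1)^{x₁} f_{2k} commutes with the differentials if and only if (−1)^{q + x₀ + x₁} = 1. -/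
/-- classification of the graded-algebra isomorphisms between the odd
and even cyclified 3-twisted K-theory algebras that fix `h₃` and swap
`ω₂ ↔ ±sh₃`, `f_{2k+1} ↔ ±sf_{2k+2}`, `sf_{2k+1} ↔ ±f_{2k}`:  the map with
`ω₂ ↦ −(−1)^q sh₃`, `sh₃ ↦ −(−1)^q ω₂`, `f_{2k+1} ↦ (−1)^{x₀} sf_{2k+2}`,
`sf_{2k+1} ↦ (−1)^{x₁} f_{2k}` commutes with the differentials if and only if
`(−1)^{q + x₀ + x₁} = 1`.  Here `A` is the even algebra (`f k ≙ f_{2k}`,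
`sf k ≙ sf_{2k}`) and `B` the odd one (`f' k ≙ f_{2k+1}`, `sf' k ≙ sf_{2k+1}`);
`hne` expresses (an instance of) the linear independence of monomials in the free
graded-commutative algebra. -/
theorem stmt10
    (A B : Type*) [Ring A] [Algebra ℝ A] [Ring B] [Algebra ℝ B]
    (σA : A →ₐ[ℝ] A) (σB : B →ₐ[ℝ] B)
    (dA : A →ₗ[ℝ] A) (dB : B →ₗ[ℝ] B)
    (hLA : ∀ x y : A, dA (x * y) = dA x * y + σA x * dA y)
    (hLB : ∀ x y : B, dB (x * y) = dB x * y + σB x * dB y)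
    -- the even algebra A
    (ω₂ h₃ sh₃ : A) (f sf : ℤ → A)
    (hdω₂ : dA ω₂ = 0) (hdh₃ : dA h₃ = ω₂ * sh₃) (hdsh₃ : dA sh₃ = 0)
    (hdf : ∀ k : ℤ, dA (f (k + 1)) = h₃ * f k + ω₂ * sf (k + 1))
    (hdsf : ∀ k : ℤ, dA (sf (k + 1)) = - (sh₃ * f k) + h₃ * sf k)
    (hσω₂ : σA ω₂ = ω₂) (hσh₃ : σA h₃ = - h₃) (hσsh₃ : σA sh₃ = sh₃)
    (hσf : ∀ k, σA (f k) = f k) (hσsf : ∀ k, σA (sf k) = - sf k)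
    (hcommA : ω₂ * sh₃ = sh₃ * ω₂)
    -- the odd algebra B
    (ω₂' h₃' sh₃' : B) (f' sf' : ℤ → B)
    (hgenB : Algebra.adjoin ℝ
      (({ω₂', h₃', sh₃'} : Set B) ∪ Set.range f' ∪ Set.range sf') = ⊤)
    (hdω₂' : dB ω₂' = 0) (hdh₃' : dB h₃' = ω₂' * sh₃') (hdsh₃' : dB sh₃' = 0)
    (hdf' : ∀ k : ℤ, dB (f' k) = h₃' * f' (k - 1) + ω₂' * sf' k)
    (hdsf' : ∀ k : ℤ, dB (sf' (k + 1)) = - (sh₃' * f' k) + h₃' * sf' k)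
    (hσω₂' : σB ω₂' = ω₂') (hσh₃' : σB h₃' = - h₃') (hσsh₃' : σB sh₃' = sh₃')
    (hσf' : ∀ k, σB (f' k) = - f' k) (hσsf' : ∀ k, σB (sf' k) = sf' k)
    -- the candidate isomorphism (a graded-algebra hom) with sign parameters
    (q x₀ x₁ : ℕ)
    (Φ : B →ₐ[ℝ] A)
    (hΦσ : ∀ y : B, Φ (σB y) = σA (Φ y))
    (hΦω₂' : Φ ω₂' = ((-1 : ℝ) ^ (q + 1)) • sh₃)      -- ω₂ ↦ −(−1)^q sh₃
    (hΦsh₃' : Φ sh₃' = ((-1 : ℝ) ^ (q + 1)) • ω₂)     -- sh₃ ↦ −(−1)^q ω₂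
    (hΦh₃' : Φ h₃' = h₃)
    (hΦf' : ∀ k : ℤ, Φ (f' k) = ((-1 : ℝ) ^ x₀) • sf (k + 1))  -- f_{2k+1} ↦ ±sf_{2k+2}
    (hΦsf' : ∀ k : ℤ, Φ (sf' k) = ((-1 : ℝ) ^ x₁) • f k)       -- sf_{2k+1} ↦ ±f_{2k}
    -- nondegeneracy (freeness) of the monomial sh₃·f₀
    (hne : sh₃ * f 0 ≠ 0) :
    (∀ y : B, Φ (dB y) = dA (Φ y)) ↔ ((-1 : ℝ) ^ (q + x₀ + x₁) = 1) := by
    -- basic facts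
  have hsq : ∀ n : ℕ, ((-1:ℝ))^n * ((-1:ℝ))^n = 1 := by
    intro n
    rw [← pow_add, ← two_mul, pow_mul]
    norm_num
  have hdA1 : dA 1 = 0 := by
    have h := hLA 1 1
    simp only [mul_one, one_mul, map_one] at h
    exact (left_eq_add.mp h)
  have hdB1 : dB 1 = 0 := by
    have h := hLB 1 1
    simp only [mul_one, one_mul, map_one] at h
    exact (left_eq_add.mp h)
  constructor
  · intro hc
    have h := hc (f' 0)
    rw [hdf' 0, map_add, map_mul, map_mul, hΦh₃', hΦf', hΦf', hΦω₂', hΦsf'] at h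
    norm_num at h
    have h0 : dA (sf (0 + 1)) = - (sh₃ * f 0) + h₃ * sf 0 := hdsf 0
    norm_num at h0
    rw [h0] at h
    have h2 : ((-1:ℝ)^(q+1) * (-1)^x₁ + (-1)^x₀) • (sh₃ * f 0) = 0 := by
      linear_combination (norm := module) h
    rcases smul_eq_zero.mp h2 with h3 | h3
    · rw [pow_add, pow_add]
      rw [pow_succ] at h3
      linear_combination (-((-1:ℝ)^x₀)) * h3 + hsq x₀
    · exact absurd h3 hne
  · intro hsign
    rw [pow_add, pow_add] at hsign
    have hb2 := hsq x₀
    have hc2 := hsq x₁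
    have hkey1 : (-1:ℝ)^x₁ * (-1)^(q+1) = -(-1:ℝ)^x₀ := by
      rw [pow_succ]
      linear_combination (-((-1:ℝ)^x₀)) * hsign + ((-1:ℝ)^q * (-1:ℝ)^x₁) * hb2
    have hkey2 : (-1:ℝ)^x₀ * (-1)^(q+1) = -(-1:ℝ)^x₁ := by
      rw [pow_succ]
      linear_combination (-((-1:ℝ)^x₁)) * hsign + ((-1:ℝ)^q * (-1:ℝ)^x₀) * hc2
    intro y
    have hy : y ∈ Algebra.adjoin ℝ
        (({ω₂', h₃', sh₃'} : Set B) ∪ Set.range f' ∪ Set.range sf') := by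
      rw [hgenB]; trivial
    induction hy using Algebra.adjoin_induction with
    | mem z hz =>
      rcases hz with (hz | ⟨k, rfl⟩) | ⟨k, rfl⟩
      · rcases hz with rfl | rfl | rfl
        · rw [hdω₂', map_zero, hΦω₂', map_smul, hdsh₃, smul_zero]
        · rw [hdh₃', map_mul, hΦω₂', hΦsh₃', hΦh₃', hdh₃, smul_mul_smul_comm,
            hsq, one_smul, hcommA]
        · rw [hdsh₃', map_zero, hΦsh₃', map_smul, hdω₂, smul_zero]
      · -- f' k
        have hk : k - 1 + 1 = k := by ring
        rw [hdf' k, map_add, map_mul, map_mul, hΦh₃', hΦf' (k-1), hΦω₂', hΦsf' k, hΦf' k,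
          LinearMap.map_smul dA, hk, hdsf k]
        simp only [mul_smul_comm, smul_mul_assoc, smul_smul, smul_add, smul_neg]
        rw [hkey1, neg_smul]
        abel
      · -- sf' k
        have hk : k - 1 + 1 = k := by ring
        have hdz := hdsf' (k - 1)
        rw [hk] at hdz
        have h0 := hdf (k - 1)
        rw [hk] at h0
        rw [hdz, map_add, map_neg, map_mul, map_mul, hΦsh₃', hΦf' (k-1), hΦh₃', hΦsf' (k-1), hΦsf' k,
          LinearMap.map_smul dA, hk, h0]
        simp only [mul_smul_comm, smul_mul_assoc, smul_smul, smul_add, smul_neg]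
        rw [hkey2, neg_smul, neg_neg]
        abel
    | algebraMap r =>
      rw [Algebra.algebraMap_eq_smul_one, map_smul, hdB1, smul_zero, map_zero,
        map_smul, map_one, map_smul, hdA1, smul_zero]
    | add x y hx hy ihx ihy =>
      rw [map_add, map_add, map_add, ihx, ihy, map_add]
    | mul x y hx hy ihx ihy =>
      rw [hLB, map_add, map_mul, map_mul, ihx, ihy, hΦσ, map_mul, hLA]
end

section
/- In the free bigraded-commutative CDGA of the basic M-algebra — generators ψ^α (deg (1,odd)), e^a (deg (1,even), a = 0,…,10), e_{a₁a₂} = e_{[a₁a₂]} (deg (1,even)), with d ψ = 0, d e^a = (ψ̄Γ^aψ), d e_{a₁a₂} = −(ψ̄Γ_{a₁a₂}ψ) — define P₃ := ½ e^{a₁} e_{a₁a₂} e^{a₂}, and let p^M_* be the fiber-integration derivation along the 10-direction (the degree (−1,even) derivation with p^M_*(e^{10}) = 1, zero on all other generators) composed with restriction to the subalgebra not containing e^{10} or doubly-10-indexed generators, under the identification ẽ_a := e_{a,10} for a ≤ 9. Then p^M_* P₃ = −ẽ_a e^a = P₂, i.e., the fiber integration of the Poincaré 3-form along the 11th dimension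 equals the Poincaré 2-form on the doubled superspace. -/
/-- in the CDGA of the basic M-algebra (coframe generators `e^a`,
`a = 0, …, 10`, and antisymmetric M2-charge generators `e_{ab}`, all of degree
`(1, even)`), the fiber integration `p` along the 11th dimension (the degree
`(−1, even)` derivation with `p (e^{10}) = 1` and vanishing on all other generators)
takes the Poincaré 3-form `P₃ := ½ e^{a} e_{ab} e^{b}` to the Poincaré 2-form
`P₂ = −ẽ_a e^a` on the doubled superspace, under the identification
`ẽ_a := e_{a,10}`. -/
theorem stmt18
    (A : Type*) [Ring A] [Algebra ℝ A]
    (σ : A →ₐ[ℝ] A) (p : A →ₗ[ℝ] A)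
    (hLeib : ∀ x y : A, p (x * y) = p x * y + σ x * p y)
    (e : Fin 11 → A) (E : Fin 11 → Fin 11 → A)
    (hanti : ∀ a b, E a b = - E b a)
    (hσe : ∀ a, σ (e a) = - e a)
    (hσE : ∀ a b, σ (E a b) = - E a b)
    -- degree-(1,even) generators anticommute
    (hcomm : ∀ a b c, e a * E b c = - (E b c * e a))
    (hpe10 : p (e 10) = 1)
    (hpe : ∀ a : Fin 11, a ≠ 10 → p (e a) = 0)
    (hpE : ∀ a b, p (E a b) = 0) :
    p ((1/2 : ℝ) • ∑ a : Fin 11, ∑ b : Fin 11, e a * E a b * e b)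
      = - ∑ a : Fin 10, E a.castSucc 10 * e a.castSucc := by
  have hE1010 : E 10 10 = 0 := by
    have h := hanti 10 10
    have h2 : (2:ℝ) • E 10 10 = 0 := by
      rw [two_smul]; nth_rewrite 1 [h]; exact neg_add_cancel _
    calc E 10 10 = (1/2:ℝ) • ((2:ℝ) • E 10 10) := by
          rw [smul_smul]; norm_num
      _ = 0 := by rw [h2, smul_zero]
  have hpe' : ∀ a : Fin 11, p (e a) = if a = 10 then 1 else 0 := by
    intro a
    by_cases h : a = 10
    · simp [h, hpe10]
    · simp [h, hpe a h]
  have key : ∀ a b : Fin 11, p (e a * E a b * e b)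
      = (if a = 10 then 1 else 0) * (E a b * e b)
        + e a * E a b * (if b = 10 then 1 else 0) := by
    intro a b
    rw [hLeib, hLeib, hpE, mul_zero, add_zero, map_mul, hσe, hσE, neg_mul_neg,
      hpe', hpe', mul_assoc]
  rw [map_smul, map_sum]
  simp_rw [map_sum, key, ite_mul, one_mul, zero_mul, mul_ite, mul_one, mul_zero,
    Finset.sum_add_distrib, Finset.sum_ite_eq' Finset.univ (10 : Fin 11),
    Finset.mem_univ, if_true]
  -- now handle the first double sum: inner sum over b of ite on a
  have hswap : ∀ a : Fin 11, (∑ b : Fin 11, if a = 10 then E a b * e b else 0)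
      = if a = 10 then ∑ b : Fin 11, E a b * e b else 0 := by
    intro a
    by_cases h : a = 10 <;> simp [h]
  simp_rw [hswap, Finset.sum_ite_eq' Finset.univ (10 : Fin 11), Finset.mem_univ,
    if_true]
  have hflip : ∀ a : Fin 11, e a * E a 10 = E 10 a * e a := by
    intro a
    rw [hcomm, hanti a 10, neg_mul, neg_neg]
  simp_rw [hflip]
  rw [← two_smul ℝ, smul_smul]
  norm_num
  rw [Fin.sum_univ_castSucc]
  have hlast : (Fin.last 10 : Fin 11) = 10 := rfl
  rw [hlast, hE1010, zero_mul, add_zero, ← Finset.sum_neg_distrib]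
  apply Finset.sum_congr rfl
  intro a _
  rw [hanti 10 a.castSucc, neg_mul]
end
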